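/- In the Kepler problem with parameter 1/5 < t < 1, for any b ∈ ℝ with b < −t or b > 0, the fiber F_t⁻¹(0,b) satisfies Ψ(F_t⁻¹(0,b)) ∩ F_t⁻¹(0,b) = ∅, where Ψ is the Hamiltonian diffeomorphism defined above. In particular, for t < 1/2 the focus-focus fiber F_t⁻¹(0, 1−2t) is displaced by Ψ. -/
import Mathlib


namespace Kepler

abbrev Pt : Type := (ℝ × ℝ × ℝ) × (ℝ × ℝ × ℝ)

def onSpheres (p : Pt) : Prop :=
  p.1.1 ^ 2 + p.1.2.1 ^ 2 + p.1.2.2 ^ 2 = 1 ∧ p.2.1 ^ 2 + p.2.2.1 ^ 2 + p.2.2.2 ^ 2 = 1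

def Psi (p : Pt) : Pt := ((-p.1.1, p.1.2.1, -p.1.2.2), (p.2.1, -p.2.2.1, -p.2.2.2))

def L (p : Pt) : ℝ := p.1.2.2 + p.2.2.2

def Ht (t : ℝ) (p : Pt) : ℝ :=
  (1 - t) * p.1.2.2 + t * (p.1.1 * p.2.1 + p.1.2.1 * p.2.2.1 + p.1.2.2 * p.2.2.2)

def fiber (t b : ℝ) : Set Pt := {p : Pt | onSpheres p ∧ L p = 0 ∧ Ht t p = b}

/-- In the Kepler problem with `1/5 < t < 1`, for `b < -t` or `b > 0`, the fiber
`F_t⁻¹(0,b)` is displaced by `Ψ`; in particular, for `t < 1/2` the focus-focus fiber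
`F_t⁻¹(0, 1-2t)` is displaced by `Ψ`. -/
theorem fiber_displaced (t : ℝ) (ht₁ : 1 / 5 < t) (ht₂ : t < 1) :
    (∀ b : ℝ, (b < -t ∨ 0 < b) → Psi '' fiber t b ∩ fiber t b = ∅) ∧
      (t < 1 / 2 → Psi '' fiber t (1 - 2 * t) ∩ fiber t (1 - 2 * t) = ∅) := by
  have key : ∀ b : ℝ, (b < -t ∨ 0 < b) → Psi '' fiber t b ∩ fiber t b = ∅ := by
    intro b hb
    ext p
    simp only [Set.mem_inter_iff, Set.mem_image, Set.mem_empty_iff_false, iff_false, not_and]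
    rintro ⟨q, hq, rfl⟩ hp
    obtain ⟨⟨hq1, hq2⟩, hqL, hqH⟩ := hq
    obtain ⟨⟨hp1, hp2⟩, hpL, hpH⟩ := hp
    simp only [Psi, L, Ht, onSpheres] at *
    -- from the two Hamiltonian equations: 2b = -2t z₁²
    have hz : b = -t * q.1.2.2 ^ 2 := by linear_combination -(hqH + hpH) / 2 + t * q.1.2.2 * hqL
    have hz2 : q.1.2.2 ^ 2 ≤ 1 := by nlinarith [sq_nonneg q.1.1, sq_nonneg q.1.2.1]
    rcases hb with h | h
    · nlinarith [sq_nonneg q.1.2.2]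
    · nlinarith [sq_nonneg q.1.2.2]
  refine ⟨key, fun h => key _ (Or.inr (by linarith))⟩

end Kepler
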